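/- Let k, ℓ ≥ 3 be integers and let π = π₁π₂…πₙ be a (k,ℓ)-crucial permutation of length n. Then: (i) there exists an integer a ≥ 1 with (k−1)a ≤ n such that π_{n+1−(k−1)a} < π_{n+1−(k−2)a} < … < π_{n+1−a}; and (ii) there exists an integer b ≥ 1 with (ℓ−1)b ≤ n such that π_{n+1−(ℓ−1)b} > π_{n+1−(ℓ−2)b} > … > π_{n+1−b}. -/

import Mathlib

/-- `π` (viewed as a 1-indexed function `ℕ → ℕ`) is a permutation of length `n`,
i.e. the values `π 1, π 2, …, π n` contain each of `1,…,n` exactly once. -/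
def IsPermutation (n : ℕ) (π : ℕ → ℕ) : Prop :=
  (∀ i, 1 ≤ i → i ≤ n → 1 ≤ π i ∧ π i ≤ n) ∧
  (∀ i j, 1 ≤ i → i ≤ n → 1 ≤ j → j ≤ n → π i = π j → i = j) ∧
  (∀ v, 1 ≤ v → v ≤ n → ∃ i, 1 ≤ i ∧ i ≤ n ∧ π i = v)

/-- `π` (of length `n`) has a strictly increasing arithmetic subsequence of length `k`,
i.e. an arithmetic occurrence of the pattern `1 2 … k`. -/
def HasArithInc (n k : ℕ) (π : ℕ → ℕ) : Prop :=
  ∃ i d : ℕ, 1 ≤ i ∧ 1 ≤ d ∧ i + (k - 1) * d ≤ n ∧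
    ∀ j, j + 1 < k → π (i + j * d) < π (i + (j + 1) * d)

/-- `π` (of length `n`) has a strictly decreasing arithmetic subsequence of length `k`,
i.e. an arithmetic occurrence of the pattern `k (k-1) … 1`. -/
def HasArithDec (n k : ℕ) (π : ℕ → ℕ) : Prop :=
  ∃ i d : ℕ, 1 ≤ i ∧ 1 ≤ d ∧ i + (k - 1) * d ≤ n ∧
    ∀ j, j + 1 < k → π (i + j * d) > π (i + (j + 1) * d)

/-- `π` (of length `n`) is `(k,l)`-anti-monotone: it avoids arithmetically
the patterns `1 2 … k` and `l (l-1) … 1`. -/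
def AntiMonotone (n k l : ℕ) (π : ℕ → ℕ) : Prop :=
  ¬ HasArithInc n k π ∧ ¬ HasArithDec n l π

/-- The extension of `π` (of length `n`) to the right by `x`: every entry `≥ x` is
increased by `1` and `x` is appended at the right end (position `n+1`). -/
def ExtendRight (n : ℕ) (π : ℕ → ℕ) (x : ℕ) : ℕ → ℕ :=
  fun i => if i = n + 1 then x else if x ≤ π i then π i + 1 else π i

/-- The extension of `π` to the left by `x`: every entry `≥ x` is increased by `1`
and `x` is prepended at the left end (position `1`). -/
def ExtendLeft (π : ℕ → ℕ) (x : ℕ) : ℕ → ℕ :=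
  fun i => if i = 1 then x else if x ≤ π (i - 1) then π (i - 1) + 1 else π (i - 1)

/-- `π` is a `(k,l)`-crucial permutation of length `n`. -/
def Crucial (n k l : ℕ) (π : ℕ → ℕ) : Prop :=
  IsPermutation n π ∧ AntiMonotone n k l π ∧
  ∀ x, 1 ≤ x → x ≤ n + 1 → ¬ AntiMonotone (n + 1) k l (ExtendRight n π x)

/-- `π` is a `(k,l)`-bicrucial permutation of length `n`. -/
def Bicrucial (n k l : ℕ) (π : ℕ → ℕ) : Prop :=
  Crucial n k l π ∧
  ∀ x, 1 ≤ x → x ≤ n + 1 → ¬ AntiMonotone (n + 1) k l (ExtendLeft π x)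

/-!
Appending `n + 1` to `π` gives a permutation that is order-isomorphic to `π` on the first `n`
positions, so by cruciality it contains a forbidden arithmetic chain through the new last
entry. A decreasing chain cannot end at the maximum, hence it is an increasing chain of
length `k` ending at position `n + 1`; dropping its last term gives (i). Appending `1` gives (ii)
in the same way.
-/

/-- `HasArithInc` and `HasArithDec` unfold to the instances `r = (· < ·)` and `r = (· > ·)`. -/
def HasArithChain (n k : ℕ) (r : ℕ → ℕ → Prop) (π : ℕ → ℕ) : Prop :=
  ∃ i d : ℕ, 1 ≤ i ∧ 1 ≤ d ∧ i + (k - 1) * d ≤ n ∧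
    ∀ j, j + 1 < k → r (π (i + j * d)) (π (i + (j + 1) * d))

def HasArithChainEndingAt (m k : ℕ) (r : ℕ → ℕ → Prop) (π : ℕ → ℕ) : Prop :=
  ∃ d, 1 ≤ d ∧ (k - 1) * d < m ∧
    ∀ j, j + 1 < k → r (π (m - (j + 1) * d)) (π (m - j * d))

section Chains

variable {n k : ℕ} {r : ℕ → ℕ → Prop} {σ π : ℕ → ℕ}

theorem HasArithChain.of_rel
    (hrel : ∀ p q, p ≤ n → q ≤ n → r (σ p) (σ q) → r (π p) (π q))
    (h : HasArithChain n k r σ) : HasArithChain n k r π := by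
  obtain ⟨i, d, hi, hd, hlast, hchain⟩ := h
  refine ⟨i, d, hi, hd, hlast, fun j hj => hrel _ _ ?_ ?_ (hchain j hj)⟩
  · have : j * d ≤ (k - 1) * d := Nat.mul_le_mul_right d (by omega)
    omega
  · have : (j + 1) * d ≤ (k - 1) * d := Nat.mul_le_mul_right d (by omega)
    omega

theorem HasArithChain.or_endingAt_of_succ (h : HasArithChain (n + 1) k r σ) :
    HasArithChain n k r σ ∨ HasArithChainEndingAt (n + 1) k r σ := by
  obtain ⟨i, d, hi, hd, hlast, hchain⟩ := h
  by_cases hn : i + (k - 1) * d ≤ n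
  · exact Or.inl ⟨i, d, hi, hd, hn, hchain⟩
  refine Or.inr ⟨d, hd, by omega, fun j hj => ?_⟩
  -- read backwards from `n + 1`, the `j`-th step is the `(k - 2 - j)`-th step of the chain
  have hsplit : (k - 1) * d = (k - 2 - j) * d + (j + 1) * d := by
    rw [← add_mul]; congr 1; omega
  have hnext : (k - 2 - j + 1) * d = (k - 2 - j) * d + d := add_one_mul _ _
  have hstep : (j + 1) * d = j * d + d := add_one_mul _ _
  have := hchain (k - 2 - j) (by omega)
  rwa [show i + (k - 2 - j) * d = n + 1 - (j + 1) * d by omega,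
    show i + (k - 2 - j + 1) * d = n + 1 - j * d by omega] at this

theorem HasArithChainEndingAt.exists_last_step {m : ℕ} (h : HasArithChainEndingAt m k r σ)
    (hk : 2 ≤ k) : ∃ p, 1 ≤ p ∧ p < m ∧ r (σ p) (σ m) := by
  obtain ⟨d, hd, hlt, hchain⟩ := h
  have : d ≤ (k - 1) * d := Nat.le_mul_of_pos_left d (by omega)
  exact ⟨m - d, by omega, by omega, by simpa using hchain 0 (by omega)⟩

theorem HasArithChainEndingAt.drop_last
    (h : HasArithChainEndingAt (n + 1) k r σ)
    (hrel : ∀ p q, p ≤ n → q ≤ n → r (σ p) (σ q) → r (π p) (π q)) :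
    ∃ d, 1 ≤ d ∧ (k - 1) * d ≤ n ∧
      ∀ j, 1 ≤ j → j + 1 < k → r (π (n + 1 - (j + 1) * d)) (π (n + 1 - j * d)) := by
  obtain ⟨d, hd, hlt, hchain⟩ := h
  refine ⟨d, hd, by omega, fun j hj hjk => hrel _ _ ?_ ?_ (hchain j hjk)⟩
  · have : 1 ≤ (j + 1) * d := Nat.one_le_iff_ne_zero.2 (by positivity)
    omega
  · have : 1 ≤ j * d := Nat.mul_le_mul hj hd
    omega

end Chains

section ExtendRight

variable {n x p q : ℕ} {π : ℕ → ℕ}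

theorem extendRight_last : ExtendRight n π x (n + 1) = x := by
  simp [ExtendRight]

theorem extendRight_lt_extendRight_iff (hp : p ≤ n) (hq : q ≤ n) :
    ExtendRight n π x p < ExtendRight n π x q ↔ π p < π q := by
  simp only [ExtendRight, if_neg (show p ≠ n + 1 by omega), if_neg (show q ≠ n + 1 by omega)]
  split_ifs <;> omega

theorem extendRight_lt_iff (hp : p ≤ n) : ExtendRight n π x p < x ↔ π p < x := by
  simp only [ExtendRight, if_neg (show p ≠ n + 1 by omega)]
  split_ifs <;> omega

theorem lt_extendRight_iff (hp : p ≤ n) : x < ExtendRight n π x p ↔ x ≤ π p := by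
  simp only [ExtendRight, if_neg (show p ≠ n + 1 by omega)]
  split_ifs <;> omega

end ExtendRight

section Crucial

variable {n k l : ℕ} {π : ℕ → ℕ}

theorem hasArithChainEndingAt_of_not_antiMonotone_extendRight {x : ℕ}
    (hπ : AntiMonotone n k l π) (hx : ¬ AntiMonotone (n + 1) k l (ExtendRight n π x)) :
    HasArithChainEndingAt (n + 1) k (· < ·) (ExtendRight n π x) ∨
      HasArithChainEndingAt (n + 1) l (· > ·) (ExtendRight n π x) := by
  rcases not_and_or.1 hx with hinc | hdec
  · refine Or.inl <|
      (HasArithChain.or_endingAt_of_succ (not_not.1 hinc)).resolve_left fun h => hπ.1 ?_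
    exact h.of_rel fun p q hp hq => (extendRight_lt_extendRight_iff hp hq).1
  · refine Or.inr <|
      (HasArithChain.or_endingAt_of_succ (not_not.1 hdec)).resolve_left fun h => hπ.2 ?_
    exact h.of_rel fun p q hp hq => (extendRight_lt_extendRight_iff hq hp).1

theorem Crucial.exists_arithInc_end (h : Crucial n k l π) (hl : 2 ≤ l) :
    ∃ a, 1 ≤ a ∧ (k - 1) * a ≤ n ∧
      ∀ j, 1 ≤ j → j + 1 < k → π (n + 1 - (j + 1) * a) < π (n + 1 - j * a) := by
  obtain ⟨hperm, hπ, hext⟩ := h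
  rcases hasArithChainEndingAt_of_not_antiMonotone_extendRight hπ
    (hext (n + 1) (by omega) le_rfl) with hinc | hdec
  · exact hinc.drop_last fun p q hp hq => (extendRight_lt_extendRight_iff hp hq).1
  · obtain ⟨p, hp1, hpn, hgt⟩ := hdec.exists_last_step hl
    have hπp := (hperm.1 p hp1 (by omega)).2
    have := (extendRight_lt_iff (π := π) (by omega : p ≤ n)).2 (show π p < n + 1 by omega)
    rw [extendRight_last] at hgt
    omega

theorem Crucial.exists_arithDec_end (h : Crucial n k l π) (hk : 2 ≤ k) :
    ∃ b, 1 ≤ b ∧ (l - 1) * b ≤ n ∧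
      ∀ j, 1 ≤ j → j + 1 < l → π (n + 1 - (j + 1) * b) > π (n + 1 - j * b) := by
  obtain ⟨hperm, hπ, hext⟩ := h
  rcases hasArithChainEndingAt_of_not_antiMonotone_extendRight hπ
    (hext 1 le_rfl (by omega)) with hinc | hdec
  · obtain ⟨p, hp1, hpn, hlt⟩ := hinc.exists_last_step hk
    have hπp := (hperm.1 p hp1 (by omega)).1
    have := (lt_extendRight_iff (π := π) (by omega : p ≤ n)).2 hπp
    rw [extendRight_last] at hlt
    omega
  · exact hdec.drop_last fun p q hp hq => (extendRight_lt_extendRight_iff hq hp).1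

end Crucial

/-- Every `(k,l)`-crucial permutation of length `n` has an increasing arithmetic
subsequence of length `k-1` ending at the last position, and a decreasing
arithmetic subsequence of length `l-1` ending at the last position. -/
theorem crucial_end_sequences (k l n : ℕ) (hk : 3 ≤ k) (hl : 3 ≤ l) (π : ℕ → ℕ)
    (h : Crucial n k l π) :
    (∃ a, 1 ≤ a ∧ (k - 1) * a ≤ n ∧
      ∀ j, 1 ≤ j → j + 1 < k → π (n + 1 - (j + 1) * a) < π (n + 1 - j * a)) ∧
    (∃ b, 1 ≤ b ∧ (l - 1) * b ≤ n ∧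
      ∀ j, 1 ≤ j → j + 1 < l → π (n + 1 - (j + 1) * b) > π (n + 1 - j * b)) :=
  ⟨h.exists_arithInc_end (by omega), h.exists_arithDec_end (by omega)⟩
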